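/- The unique Nash equilibrium of the game H5 is irrational valued: some player's equilibrium strategy assigns an irrational probability to some action. In particular 1 − 1/√6 and 3 − √6 are irrational numbers in (0,1). -/

import Mathlib

/-!
Each player's payoff is affine in his own probability of playing action 1, so in equilibrium a
player who mixes is indifferent between his actions. Player 1 cannot play purely: `p = 1` forces
`q = r = 1` and `p = 0` (given `q = r`) forces `q = r = 0`, and against either profile he would
switch. The advantages of players 2 and 3 differ by `(r - q) * (1 - p)`, so with `p < 1` the one
playing action 1 more often would see the smaller advantage in it; hence `q = r`. Player 1's
indifference then reads `(3 - q) ^ 2 = 6`, i.e. `q = 3 - √6`.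
-/

open Set

/-- Expected payoff in a 3-player game where each player has two actions
(`true` = action 1, `false` = action 2), given the probabilities `p q r` of
playing action 1. -/
noncomputable def exp3 (f : Bool → Bool → Bool → ℝ) (p q r : ℝ) : ℝ :=
  p*q*r * f true true true + p*q*(1-r) * f true true false +
  p*(1-q)*r * f true false true + p*(1-q)*(1-r) * f true false false +
  (1-p)*q*r * f false true true + (1-p)*q*(1-r) * f false true false +
  (1-p)*(1-q)*r * f false false true + (1-p)*(1-q)*(1-r) * f false false false

/-- Payoff to player `i` in the 3-player zero-sum game H5; `true` = action 1. -/
noncomputable def H5 (i : Fin 3) (a b c : Bool) : ℝ :=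
  match a, b, c with
  | true,  true,  true  => ![-4, 2, 2] i
  | true,  true,  false => ![-2, 1, 1] i
  | true,  false, true  => ![-2, 1, 1] i
  | true,  false, false => ![0, 0, 0] i
  | false, true,  true  => ![0, 0, 0] i
  | false, true,  false => ![-2, 1, 1] i
  | false, false, true  => ![-2, 1, 1] i
  | false, false, false => ![-6, 3, 3] i

/-- `(p,q,r)` is a (mixed) Nash equilibrium of H5. -/
def H5NE (p q r : ℝ) : Prop :=
  p ∈ Icc (0:ℝ) 1 ∧ q ∈ Icc (0:ℝ) 1 ∧ r ∈ Icc (0:ℝ) 1 ∧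
  (∀ p' ∈ Icc (0:ℝ) 1, exp3 (H5 0) p' q r ≤ exp3 (H5 0) p q r) ∧
  (∀ q' ∈ Icc (0:ℝ) 1, exp3 (H5 1) p q' r ≤ exp3 (H5 1) p q r) ∧
  (∀ r' ∈ Icc (0:ℝ) 1, exp3 (H5 2) p q r' ≤ exp3 (H5 2) p q r)

lemma sqrt_six_mem_Ioo : Real.sqrt 6 ∈ Ioo (2 : ℝ) 3 :=
  ⟨(Real.lt_sqrt (by norm_num)).2 (by norm_num), (Real.sqrt_lt' (by norm_num)).2 (by norm_num)⟩

lemma irrational_sqrt_six : Irrational (Real.sqrt 6) := by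
  refine irrational_nrt_of_notint_nrt 2 6 (by simp) ?_ two_pos
  rintro ⟨n, hn⟩
  obtain ⟨h2, h3⟩ := sqrt_six_mem_Ioo
  rw [hn] at h2 h3
  have : (2 : ℤ) < n ∧ n < 3 := ⟨by exact_mod_cast h2, by exact_mod_cast h3⟩
  omega

section BestResponse

variable {x d : ℝ}

lemma nonpos_of_isMaxOn_mul_of_lt_one (h : IsMaxOn (· * d) (Icc 0 1) x) (hx : x < 1) : d ≤ 0 := by
  have : 1 * d ≤ x * d := h ⟨zero_le_one, le_rfl⟩
  nlinarith

lemma nonneg_of_isMaxOn_mul_of_pos (h : IsMaxOn (· * d) (Icc 0 1) x) (hx : 0 < x) : 0 ≤ d := by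
  have : 0 * d ≤ x * d := h ⟨le_rfl, zero_le_one⟩
  nlinarith

end BestResponse

lemma exp3_H5_zero (p q r : ℝ) :
    exp3 (H5 0) p q r = -6 + 4 * q + 4 * r - 2 * q * r + p * (6 - 6 * q - 6 * r + 2 * q * r) := by
  simp [exp3, H5]; ring

lemma exp3_H5_one (p q r : ℝ) :
    exp3 (H5 1) p q r = 3 - 3 * p - 2 * r + 3 * p * r + q * (-2 + 3 * p + r - p * r) := by
  simp [exp3, H5]; ring

lemma exp3_H5_two (p q r : ℝ) :
    exp3 (H5 2) p q r = 3 - 3 * p - 2 * q + 3 * p * q + r * (-2 + 3 * p + q - p * q) := by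
  simp [exp3, H5]; ring

lemma H5NE.isMaxOn_advantage {p q r : ℝ} (h : H5NE p q r) :
    IsMaxOn (· * (6 - 6 * q - 6 * r + 2 * q * r)) (Icc 0 1) p ∧
    IsMaxOn (· * (-2 + 3 * p + r - p * r)) (Icc 0 1) q ∧
    IsMaxOn (· * (-2 + 3 * p + q - p * q)) (Icc 0 1) r := by
  obtain ⟨-, -, -, h₀, h₁, h₂⟩ := h
  exact ⟨fun y hy => by simpa [exp3_H5_zero] using h₀ y hy,
    fun y hy => by simpa [exp3_H5_one] using h₁ y hy,
    fun y hy => by simpa [exp3_H5_two] using h₂ y hy⟩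

section Equilibrium

variable {p q r : ℝ}

lemma H5NE.left_lt_one (h : H5NE p q r) : p < 1 := by
  obtain ⟨h₀, h₁, h₂⟩ := h.isMaxOn_advantage
  obtain ⟨⟨-, hp1⟩, ⟨-, hq1⟩, ⟨-, hr1⟩, -⟩ := h
  refine hp1.lt_of_ne fun hp => ?_
  subst hp
  have hq : q = 1 := by
    by_contra hq
    linarith [nonpos_of_isMaxOn_mul_of_lt_one h₁ (hq1.lt_of_ne hq)]
  have hr : r = 1 := by
    by_contra hr
    linarith [nonpos_of_isMaxOn_mul_of_lt_one h₂ (hr1.lt_of_ne hr)]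
  subst hq hr
  linarith [nonneg_of_isMaxOn_mul_of_pos h₀ one_pos]

lemma H5NE.mid_eq_right (h : H5NE p q r) : q = r := by
  obtain ⟨-, h₁, h₂⟩ := h.isMaxOn_advantage
  have hp := h.left_lt_one
  obtain ⟨-, ⟨hq0, hq1⟩, ⟨hr0, hr1⟩, -⟩ := h
  rcases lt_trichotomy q r with hlt | heq | hgt
  · have := nonpos_of_isMaxOn_mul_of_lt_one h₁ (hlt.trans_le hr1)
    have := nonneg_of_isMaxOn_mul_of_pos h₂ (hq0.trans_lt hlt)
    nlinarith
  · exact heq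
  · have := nonpos_of_isMaxOn_mul_of_lt_one h₂ (hgt.trans_le hq1)
    have := nonneg_of_isMaxOn_mul_of_pos h₁ (hr0.trans_lt hgt)
    nlinarith

lemma H5NE.mid_eq_three_sub_sqrt_six (h : H5NE p q r) : q = 3 - Real.sqrt 6 := by
  obtain ⟨h₀, h₁, -⟩ := h.isMaxOn_advantage
  have hp1 := h.left_lt_one
  have hqr := h.mid_eq_right
  obtain ⟨⟨hp_nonneg, -⟩, ⟨hq0, hq1⟩, -⟩ := h
  subst hqr
  have hp0 : 0 < p := by
    refine hp_nonneg.lt_of_ne fun hp => ?_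
    subst hp
    have hq : q = 0 := by
      by_contra hq
      linarith [nonneg_of_isMaxOn_mul_of_pos h₁ (hq0.lt_of_ne' hq)]
    subst hq
    linarith [nonpos_of_isMaxOn_mul_of_lt_one h₀ hp1]
  -- Player 1 mixes, so his advantage `2 * ((3 - q) ^ 2 - 6)` vanishes.
  have hsq : (3 - q) ^ 2 = 6 := by
    nlinarith [nonpos_of_isMaxOn_mul_of_lt_one h₀ hp1, nonneg_of_isMaxOn_mul_of_pos h₀ hp0]
  have : Real.sqrt 6 = 3 - q := by
    rw [← hsq, Real.sqrt_sq (by linarith)]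
  linarith

end Equilibrium

/-- The unique Nash equilibrium of H5 is irrational valued: some player's
equilibrium strategy assigns an irrational probability to some action.
In particular 1 − 1/√6 and 3 − √6 are irrational numbers in (0,1). -/
theorem stmt10 :
    (∀ p q r : ℝ, H5NE p q r → Irrational p ∨ Irrational q ∨ Irrational r) ∧
    Irrational (1 - 1 / Real.sqrt 6) ∧ Irrational (3 - Real.sqrt 6) ∧
    (1 - 1 / Real.sqrt 6) ∈ Ioo (0:ℝ) 1 ∧ (3 - Real.sqrt 6) ∈ Ioo (0:ℝ) 1 := by
  have hirr : Irrational (3 - Real.sqrt 6) := by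
    simpa using irrational_sqrt_six.natCast_sub 3
  obtain ⟨h2, h3⟩ := sqrt_six_mem_Ioo
  have hinv : 1 / Real.sqrt 6 ∈ Ioo (0 : ℝ) 1 :=
    ⟨by positivity, (div_lt_one (by linarith)).2 (by linarith)⟩
  refine ⟨fun p q r h => Or.inr (Or.inl (h.mid_eq_three_sub_sqrt_six ▸ hirr)), ?_, hirr,
    ⟨by linarith [hinv.2], by linarith [hinv.1]⟩, ⟨by linarith, by linarith⟩⟩
  simpa [one_div] using irrational_sqrt_six.inv.natCast_sub 1
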